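/- arXiv:1812.06523 — 2 statements merged into one kernel-verified Lean document; each statement's English description precedes it below -/
import Mathlib

section
/- Let 0 < q < 1, N ≥ 1, λ ∈ GT⁺_N, and set l_i = λ_i + N − i + 1/2 for i = 1, …, N. Then χ^B_λ(q^{1/2}, q^{3/2}, …, q^{N−1/2}) = ∏_{i=1}^{N} ( (q^{−l_i/2} − q^{l_i/2}) / (q^{−(N−i+1/2)/2} − q^{(N−i+1/2)/2}) ) · V^s(q^{l_N}, q^{l_{N−1}}, …, q^{l_1}) / V^s(q^{1/2}, q^{3/2}, …, q^{N−1/2}). -/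
noncomputable section
open Complex Finset Filter Topology

/-- The symmetrized Vandermonde `V^s(z) = ∏_{i<j} (z_i + z_i⁻¹ − z_j − z_j⁻¹)`. -/
def Vs {N : ℕ} (z : Fin N → ℂ) : ℂ :=
  ∏ p ∈ Finset.univ.filter (fun p : Fin N × Fin N => p.1 < p.2),
    (z p.1 + (z p.1)⁻¹ - z p.2 - (z p.2)⁻¹)

/-- The three classical series of root systems B, C, D. -/
inductive BCD | B | C | D
  deriving DecidableEq

/-- `ε = 1/2, 1, 0` for types B, C, D respectively. -/
def bcdEps : BCD → ℝ
  | .B => 1/2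
  | .C => 1
  | .D => 0

/-- The `(i,j)` entries of the Weyl determinant formulas, written as Laurent polynomials:
for type B, `(z^{m+1/2} − z^{−m−1/2})/(z^{1/2} − z^{−1/2}) = z^{−m}(1 + z + ⋯ + z^{2m})`;
for type C, `(z^{m+1} − z^{−m−1})/(z − z^{−1}) = z^{−m}(1 + z² + ⋯ + z^{2m})`;
for type D, `z^m + z^{−m}`. -/
def bcdEntry : BCD → ℕ → ℂ → ℂ
  | .B, m, z => z ^ (-(m : ℤ)) * ∑ r ∈ Finset.range (2 * m + 1), z ^ r
  | .C, m, z => z ^ (-(m : ℤ)) * ∑ r ∈ Finset.range (m + 1), z ^ (2 * r)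
  | .D, m, z => z ^ (m : ℤ) + z ^ (-(m : ℤ))

/-- The Weyl character formula ratio `det / V^s` (types B, C, D). -/
def qcChiRaw (G : BCD) {N : ℕ} (lam : Fin N → ℤ) (z : Fin N → ℂ) : ℂ :=
  (Matrix.of fun i j : Fin N =>
    bcdEntry G (lam i + (N : ℤ) - 1 - (i : ℕ)).toNat (z j)).det / Vs z

/-- The character `χ^G_λ`, i.e. the `W_N`-symmetric Laurent polynomial given by the Weyl
formula.  It is obtained from the ratio `det / V^s` as its (unique) continuous extension,
computed via a generic perturbation `z_i ↦ t^{i+1} z_i`; for every `z ∈ (ℂ∖{0})^N` the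
limit below exists and equals the value of the character Laurent polynomial at `z`. -/
def qcChi (G : BCD) {N : ℕ} (lam : Fin N → ℤ) (z : Fin N → ℂ) : ℂ :=
  limUnder (𝓝[{t : ℂ | Vs (fun i => t ^ ((i : ℕ) + 1) * z i) ≠ 0}] (1 : ℂ))
    (fun t => qcChiRaw G lam (fun i => t ^ ((i : ℕ) + 1) * z i))

/-- The q-Pochhammer symbol `(a; q)_n`. -/
def qPoch (q : ℝ) (a : ℂ) (n : ℕ) : ℂ := ∏ i ∈ Finset.range n, (1 - a * (q : ℂ) ^ i)

/-- The q-Pochhammer symbol `(a; q)_∞`. -/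
def qPochInf (q : ℝ) (a : ℂ) : ℂ := ∏' i : ℕ, (1 - a * (q : ℂ) ^ i)

/-!
Put `t = q^{1/4}`, `a_j = t^{2j+1}` and `b_i = t^{2m_i+1}` with `m_i = λ_i + N - 1 - i`, so that the
evaluation point is `z_j = a_j²` and `q^{l_i} = b_i²`. Multiplying column `j` of the type B Weyl
determinant by `a_j - a_j⁻¹` turns its `(i, j)` entry into
`a_j^{2m_i+1} - a_j^{-(2m_i+1)} = b_i^{2j+1} - b_i^{-(2j+1)}`: the roles of `λ + ρ` and `ρ` are
exchanged, and the determinant becomes the Weyl denominator in the `b_i`. Rescaled Chebyshev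
polynomials of the fourth kind reduce that one to a Vandermonde determinant in `b_i² + b_i⁻²`.
Finally, the point is regular (`V^s(z) ≠ 0`), so the character is the Weyl ratio there.
-/

open Polynomial

/-- Rescaled Chebyshev polynomials of the fourth kind: `chebyshevW R n (u + u⁻¹) = u⁻ⁿ + ⋯ + uⁿ`. -/
def chebyshevW (R : Type*) [CommRing R] : ℕ → R[X]
  | 0 => 1
  | 1 => X + 1
  | n + 2 => X * chebyshevW R (n + 1) - chebyshevW R n

theorem chebyshevW_monic_natDegree {R : Type*} [CommRing R] [Nontrivial R] (n : ℕ) :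
    (chebyshevW R n).Monic ∧ (chebyshevW R n).natDegree = n := by
  induction n using Nat.twoStepInduction with
  | zero => exact ⟨monic_one, natDegree_one⟩
  | one => exact ⟨monic_X_add_C 1, natDegree_X_add_C 1⟩
  | more n ih ih1 =>
    have hdeg : (X * chebyshevW R (n + 1)).natDegree = n + 2 := by
      rw [natDegree_X_mul ih1.1.ne_zero, ih1.2]
    have hlt : (chebyshevW R n).natDegree < (X * chebyshevW R (n + 1)).natDegree := by
      rw [hdeg, ih.2]
      omega
    exact ⟨(monic_X.mul ih1.1).sub_of_left (degree_lt_degree hlt),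
      (natDegree_sub_eq_left_of_natDegree_lt hlt).trans hdeg⟩

section Field

variable {K : Type*} [Field K]

theorem sub_inv_mul_eval_chebyshevW {a : K} (ha : a ≠ 0) (n : ℕ) :
    (a - a⁻¹) * (chebyshevW K n).eval (a ^ 2 + (a ^ 2)⁻¹) =
      a ^ (2 * n + 1) - (a ^ (2 * n + 1))⁻¹ := by
  induction n using Nat.twoStepInduction with
  | zero => simp [chebyshevW]
  | one =>
    simp only [chebyshevW, eval_add, eval_X, eval_one]
    field_simp
    ring
  | more n ih ih1 =>
    simp only [chebyshevW, eval_sub, eval_mul, eval_X] at ih ih1 ⊢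
    linear_combination (norm := skip) (a ^ 2 + (a ^ 2)⁻¹) * ih1 - ih
    field_simp
    ring

/-- The type B Weyl denominator formula. -/
theorem det_pow_odd_sub_inv {N : ℕ} {a : Fin N → K} (ha : ∀ i, a i ≠ 0) :
    (Matrix.of fun i j : Fin N => a i ^ (2 * (j : ℕ) + 1) - (a i ^ (2 * (j : ℕ) + 1))⁻¹).det =
      (∏ i, (a i - (a i)⁻¹)) *
        ∏ i, ∏ j ∈ Ioi i, (a j ^ 2 + (a j ^ 2)⁻¹ - a i ^ 2 - (a i ^ 2)⁻¹) := by
  let v : Fin N → K := fun i => a i ^ 2 + (a i ^ 2)⁻¹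
  have hentry : (Matrix.of fun i j : Fin N =>
      a i ^ (2 * (j : ℕ) + 1) - (a i ^ (2 * (j : ℕ) + 1))⁻¹) =
      Matrix.of fun i (j : Fin N) => (a i - (a i)⁻¹) * (chebyshevW K j).eval (v i) := by
    ext i j
    exact (sub_inv_mul_eval_chebyshevW (ha i) j).symm
  have hcol := Matrix.det_mul_column (fun i => a i - (a i)⁻¹)
    (Matrix.of fun i (j : Fin N) => (chebyshevW K j).eval (v i))
  simp only [Matrix.of_apply] at hcol
  rw [hentry, hcol,
    ← Matrix.det_eval_matrixOfPolynomials_eq_det_vandermonde v _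
      (fun j => (chebyshevW_monic_natDegree j).2) (fun j => (chebyshevW_monic_natDegree j).1),
    Matrix.det_vandermonde]
  simp only [v, sub_add_eq_sub_sub]

end Field

theorem Vs_comp_rev {N : ℕ} (z : Fin N → ℂ) :
    Vs (fun i => z i.rev) = ∏ i, ∏ j ∈ Ioi i, (z j + (z j)⁻¹ - z i - (z i)⁻¹) := by
  rw [Vs, Finset.prod_sigma']
  refine Finset.prod_nbij' (fun p => ⟨p.2.rev, p.1.rev⟩) (fun p => (p.2.rev, p.1.rev))
    ?_ ?_ ?_ ?_ ?_ <;> simp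

theorem sub_inv_mul_bcdEntry_B {a : ℂ} (ha : a ≠ 0) (n : ℕ) :
    (a - a⁻¹) * bcdEntry .B n (a ^ 2) = a ^ (2 * n + 1) - (a ^ (2 * n + 1))⁻¹ := by
  have hgeom := geom_sum_mul (a ^ 2) (2 * n + 1)
  rw [bcdEntry, zpow_neg, zpow_natCast]
  field_simp
  linear_combination a ^ (2 * n + 1) * hgeom

theorem prod_mul_det_bcdEntry_B {N : ℕ} {t : ℂ} (ht : t ≠ 0) (m : Fin N → ℕ) :
    (∏ j : Fin N, (t ^ (2 * (j : ℕ) + 1) - (t ^ (2 * (j : ℕ) + 1))⁻¹)) *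
      (Matrix.of fun i j : Fin N => bcdEntry .B (m i) ((t ^ (2 * (j : ℕ) + 1)) ^ 2)).det =
    (∏ i, (t ^ (2 * m i + 1) - (t ^ (2 * m i + 1))⁻¹)) *
      Vs (fun i => (t ^ (2 * m i.rev + 1)) ^ 2) := by
  have hrow := Matrix.det_mul_row
    (fun j : Fin N => t ^ (2 * (j : ℕ) + 1) - (t ^ (2 * (j : ℕ) + 1))⁻¹)
    (Matrix.of fun i j => bcdEntry .B (m i) ((t ^ (2 * (j : ℕ) + 1)) ^ 2))
  simp only [Matrix.of_apply] at hrow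
  have hentry : (Matrix.of fun i j : Fin N =>
      (t ^ (2 * (j : ℕ) + 1) - (t ^ (2 * (j : ℕ) + 1))⁻¹) *
        bcdEntry .B (m i) ((t ^ (2 * (j : ℕ) + 1)) ^ 2)) =
      Matrix.of fun i j : Fin N => (t ^ (2 * m i + 1)) ^ (2 * (j : ℕ) + 1) -
        ((t ^ (2 * m i + 1)) ^ (2 * (j : ℕ) + 1))⁻¹ := by
    ext i j
    rw [Matrix.of_apply, Matrix.of_apply, sub_inv_mul_bcdEntry_B (pow_ne_zero _ ht), ← pow_mul,
      ← pow_mul, mul_comm (2 * (j : ℕ) + 1)]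
  rw [← hrow, hentry, det_pow_odd_sub_inv fun i => pow_ne_zero _ ht]
  exact congrArg _ (Vs_comp_rev fun i => (t ^ (2 * m i + 1)) ^ 2).symm

theorem det_bcdEntry_B_div_Vs {N : ℕ} {t : ℂ} (ht : t ≠ 0)
    (hsub : ∀ j : Fin N, t ^ (2 * (j : ℕ) + 1) - (t ^ (2 * (j : ℕ) + 1))⁻¹ ≠ 0) (m : Fin N → ℕ) :
    (Matrix.of fun i j : Fin N => bcdEntry .B (m i) ((t ^ (2 * (j : ℕ) + 1)) ^ 2)).det /
        Vs (fun j : Fin N => (t ^ (2 * (j : ℕ) + 1)) ^ 2) =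
      (∏ i : Fin N, ((t ^ (2 * m i + 1))⁻¹ - t ^ (2 * m i + 1)) /
          ((t ^ (2 * (i.rev : ℕ) + 1))⁻¹ - t ^ (2 * (i.rev : ℕ) + 1))) *
        (Vs (fun i => (t ^ (2 * m i.rev + 1)) ^ 2) /
          Vs (fun j : Fin N => (t ^ (2 * (j : ℕ) + 1)) ^ 2)) := by
  have hprod : (∏ i : Fin N, ((t ^ (2 * m i + 1))⁻¹ - t ^ (2 * m i + 1)) /
        ((t ^ (2 * (i.rev : ℕ) + 1))⁻¹ - t ^ (2 * (i.rev : ℕ) + 1))) =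
      (∏ i, (t ^ (2 * m i + 1) - (t ^ (2 * m i + 1))⁻¹)) /
        ∏ j : Fin N, (t ^ (2 * (j : ℕ) + 1) - (t ^ (2 * (j : ℕ) + 1))⁻¹) := by
    simp only [← neg_sub (t ^ _), neg_div_neg_eq]
    rw [prod_div_distrib]
    congr 1
    exact Fintype.prod_equiv Fin.revPerm _ _ fun _ => rfl
  rw [hprod, div_mul_div_comm, ← prod_mul_det_bcdEntry_B ht m,
    mul_div_mul_left _ _ (prod_ne_zero_iff.2 fun j _ => hsub j)]

theorem continuousAt_bcdEntry (G : BCD) (m : ℕ) {z : ℂ} (hz : z ≠ 0) :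
    ContinuousAt (bcdEntry G m) z := by
  cases G <;> unfold bcdEntry <;> fun_prop (disch := exact Or.inl hz)

theorem continuousAt_Vs {N : ℕ} {z : Fin N → ℂ} (hz : ∀ i, z i ≠ 0) : ContinuousAt Vs z := by
  refine tendsto_finsetProd _ fun p _ => ?_
  have hev (i : Fin N) : ContinuousAt (fun w : Fin N → ℂ => w i) z :=
    (continuous_apply i).continuousAt
  exact (((hev _).add ((hev _).inv₀ (hz _))).sub (hev _)).sub ((hev _).inv₀ (hz _))

theorem continuousAt_qcChiRaw (G : BCD) {N : ℕ} (lam : Fin N → ℤ) {z : Fin N → ℂ}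
    (hz : ∀ i, z i ≠ 0) (hVs : Vs z ≠ 0) : ContinuousAt (qcChiRaw G lam) z := by
  have hdet : ContinuousAt (fun w : Fin N → ℂ => (Matrix.of fun i j : Fin N =>
      bcdEntry G (lam i + (N : ℤ) - 1 - (i : ℕ)).toNat (w j)).det) z :=
    continuous_id.matrix_det.continuousAt.comp <| continuousAt_pi.2 fun i =>
      continuousAt_pi.2 fun j => (continuousAt_bcdEntry G _ (hz j)).comp
        (f := fun w : Fin N → ℂ => w j) (continuous_apply j).continuousAt
  exact hdet.div (continuousAt_Vs hz) hVs

theorem qcChi_eq_qcChiRaw (G : BCD) {N : ℕ} (lam : Fin N → ℤ) {z : Fin N → ℂ}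
    (hz : ∀ i, z i ≠ 0) (hVs : Vs z ≠ 0) : qcChi G lam z = qcChiRaw G lam z := by
  let w : ℂ → Fin N → ℂ := fun t i => t ^ ((i : ℕ) + 1) * z i
  have hw1 : w 1 = z := by funext i; simp [w]
  have hcont : ContinuousAt (fun t => qcChiRaw G lam (w t)) 1 :=
    (hw1 ▸ continuousAt_qcChiRaw G lam hz hVs).comp (by fun_prop)
  have : (𝓝[{t : ℂ | Vs (w t) ≠ 0}] (1 : ℂ)).NeBot :=
    mem_closure_iff_nhdsWithin_neBot.mp (subset_closure (by simpa [hw1] using hVs))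
  rw [qcChi, hcont.continuousWithinAt.tendsto.limUnder_eq, hw1]

theorem add_inv_injOn_Ioo : Set.InjOn (fun x : ℝ => x + x⁻¹) (Set.Ioo 0 1) := by
  intro x ⟨hx0, hx1⟩ y ⟨hy0, hy1⟩ hxy
  have hfactor : (x - y) * (x * y - 1) = 0 := by
    simp only at hxy
    field_simp at hxy
    linear_combination hxy
  have hxy1 : x * y - 1 ≠ 0 := by nlinarith
  exact sub_eq_zero.1 ((mul_eq_zero.1 hfactor).resolve_right hxy1)

theorem Vs_ofReal_ne_zero {N : ℕ} {x : Fin N → ℝ} (hx : Function.Injective x)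
    (hx01 : ∀ i, x i ∈ Set.Ioo 0 1) : Vs (fun i => (x i : ℂ)) ≠ 0 := by
  rw [Vs, prod_ne_zero_iff]
  intro p hp
  have hne : x p.1 + (x p.1)⁻¹ ≠ x p.2 + (x p.2)⁻¹ := fun h =>
    (mem_filter.1 hp).2.ne (hx (add_inv_injOn_Ioo (hx01 _) (hx01 _) h))
  rw [sub_sub, sub_ne_zero]
  exact_mod_cast hne

theorem qcChi_geometric_eq_qcChiRaw (G : BCD) {N : ℕ} (lam : Fin N → ℤ) {q : ℝ} (hq0 : 0 < q)
    (hq1 : q < 1) :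
    qcChi G lam (fun j : Fin N => (q : ℂ) ^ (((j : ℕ) : ℂ) + 1 / 2)) =
      qcChiRaw G lam (fun j : Fin N => ((q ^ (((j : ℕ) : ℝ) + 1 / 2) : ℝ) : ℂ)) := by
  have hz : (fun j : Fin N => (q : ℂ) ^ (((j : ℕ) : ℂ) + 1 / 2)) =
      fun j : Fin N => ((q ^ (((j : ℕ) : ℝ) + 1 / 2) : ℝ) : ℂ) :=
    funext fun j => by rw [ofReal_cpow hq0.le]; push_cast; rfl
  have hinj : Function.Injective fun j : Fin N => q ^ (((j : ℕ) : ℝ) + 1 / 2) :=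
    StrictAnti.injective fun i j hij => Real.rpow_lt_rpow_of_exponent_gt hq0 hq1
      (by have : (i : ℕ) < j := hij; simp only [add_lt_add_iff_right]; exact_mod_cast this)
  rw [hz]
  exact qcChi_eq_qcChiRaw G lam (fun j => ofReal_ne_zero.2 (by positivity))
    (Vs_ofReal_ne_zero hinj fun j => ⟨by positivity, Real.rpow_lt_one hq0.le hq1 (by positivity)⟩)

theorem ofReal_sub_inv_ne_zero {x : ℝ} (hx0 : 0 < x) (hx1 : x < 1) : (x : ℂ) - (x : ℂ)⁻¹ ≠ 0 := by
  have hlt : x - x⁻¹ < 0 := sub_neg.2 (hx1.trans ((one_lt_inv₀ hx0).2 hx1))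
  exact_mod_cast hlt.ne

theorem ofReal_rpow_eq_pow_rpow_quarter {q : ℝ} (hq : 0 ≤ q) {x : ℝ} {k : ℕ} (hx : 4 * x = k) :
    ((q ^ x : ℝ) : ℂ) = ((q ^ (1 / 4 : ℝ) : ℝ) : ℂ) ^ k := by
  rw [← ofReal_pow, ← Real.rpow_natCast, ← Real.rpow_mul hq, ← hx]
  ring_nf

theorem ofReal_rpow_neg_half_sub_rpow_half {q : ℝ} (hq : 0 ≤ q) {y : ℝ} {k : ℕ} (hy : 2 * y = k) :
    ((q ^ (-y / 2) - q ^ (y / 2) : ℝ) : ℂ) =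
      (((q ^ (1 / 4 : ℝ) : ℝ) : ℂ) ^ k)⁻¹ - ((q ^ (1 / 4 : ℝ) : ℝ) : ℂ) ^ k := by
  rw [neg_div, Real.rpow_neg hq, ofReal_sub, ofReal_inv,
    ofReal_rpow_eq_pow_rpow_quarter hq (by linarith : 4 * (y / 2) = k)]

theorem stmt12_general (q : ℝ) (hq0 : 0 < q) (hq1 : q < 1)
    (N : ℕ)
    (lam : Fin N → ℤ) (hlam0 : ∀ i, 0 ≤ lam i)
    (L : Fin N → ℝ)
    (hL : ∀ i : Fin N, L i = ((lam i : ℤ) : ℝ) + (N : ℝ) - 1 - ((i : ℕ) : ℝ) + 1 / 2) :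
    qcChi .B lam (fun j : Fin N => ((q : ℂ) ^ (((j : ℕ) : ℂ) + 1 / 2))) =
    (∏ i : Fin N,
        Complex.ofReal (q ^ (-(L i) / 2) - q ^ (L i / 2)) /
          Complex.ofReal
            (q ^ (-((N : ℝ) - ((i : ℕ) : ℝ) - 1 / 2) / 2) -
              q ^ (((N : ℝ) - ((i : ℕ) : ℝ) - 1 / 2) / 2))) *
      (Vs (fun j : Fin N => Complex.ofReal (q ^ (L (Fin.rev j)))) /
        Vs (fun j : Fin N => Complex.ofReal (q ^ (((j : ℕ) : ℝ) + 1 / 2)))) := by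
  set t : ℝ := q ^ (1 / 4 : ℝ)
  have ht0 : 0 < t := by positivity
  have ht1 : t < 1 := Real.rpow_lt_one hq0.le hq1 (by norm_num)
  set m : Fin N → ℕ := fun i => (lam i + N - 1 - i).toNat
  have hLm (i : Fin N) : L i = m i + 1 / 2 := by
    have : 0 ≤ lam i + N - 1 - i := by have := hlam0 i; omega
    simp only [m, hL i, ← Int.cast_natCast (R := ℝ), Int.toNat_of_nonneg this]
    push_cast
    ring
  have hpoint (j : Fin N) :
      ((q ^ (((j : ℕ) : ℝ) + 1 / 2) : ℝ) : ℂ) = ((t : ℂ) ^ (2 * (j : ℕ) + 1)) ^ 2 := by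
    rw [ofReal_rpow_eq_pow_rpow_quarter hq0.le (k := 4 * j + 2) (by push_cast; ring)]
    ring
  have hVnum (i : Fin N) : ((q ^ L i : ℝ) : ℂ) = ((t : ℂ) ^ (2 * m i + 1)) ^ 2 := by
    rw [ofReal_rpow_eq_pow_rpow_quarter hq0.le (k := 4 * m i + 2) (by rw [hLm i]; push_cast; ring)]
    ring
  have hnum (i : Fin N) : ((q ^ (-(L i) / 2) - q ^ (L i / 2) : ℝ) : ℂ) =
      ((t : ℂ) ^ (2 * m i + 1))⁻¹ - (t : ℂ) ^ (2 * m i + 1) :=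
    ofReal_rpow_neg_half_sub_rpow_half hq0.le (by rw [hLm i]; push_cast; ring)
  have hden (i : Fin N) : ((q ^ (-((N : ℝ) - ((i : ℕ) : ℝ) - 1 / 2) / 2) -
      q ^ (((N : ℝ) - ((i : ℕ) : ℝ) - 1 / 2) / 2) : ℝ) : ℂ) =
      ((t : ℂ) ^ (2 * (i.rev : ℕ) + 1))⁻¹ - (t : ℂ) ^ (2 * (i.rev : ℕ) + 1) :=
    ofReal_rpow_neg_half_sub_rpow_half hq0.le
      (by rw [Fin.val_rev]; push_cast [Nat.cast_sub (Nat.succ_le_of_lt i.isLt)]; ring)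
  rw [qcChi_geometric_eq_qcChiRaw .B lam hq0 hq1, qcChiRaw]
  simp only [hpoint, hnum, hden, hVnum]
  refine det_bcdEntry_B_div_Vs (ofReal_ne_zero.2 ht0.ne') (fun j => ?_) m
  exact_mod_cast ofReal_sub_inv_ne_zero (pow_pos ht0 _) (pow_lt_one₀ ht0.le ht1 (by omega))

/-- evaluation of the type B character at the `q`-geometric point
(Proposition 2.7, type B case): with `l_i = λ_i + N − i + 1/2`,
`χ^B_λ(q^{1/2},…,q^{N−1/2}) = ∏_{i=1}^N (q^{−l_i/2} − q^{l_i/2})/(q^{−(N−i+1/2)/2} − q^{(N−i+1/2)/2})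
  · V^s(q^{l_N},…,q^{l_1})/V^s(q^{1/2},…,q^{N−1/2})`. -/
theorem stmt12 (q : ℝ) (hq0 : 0 < q) (hq1 : q < 1)
    (N : ℕ) (hN : 1 ≤ N)
    (lam : Fin N → ℤ) (hlam : Antitone lam) (hlam0 : ∀ i, 0 ≤ lam i)
    (L : Fin N → ℝ)
    (hL : ∀ i : Fin N, L i = ((lam i : ℤ) : ℝ) + (N : ℝ) - 1 - ((i : ℕ) : ℝ) + 1 / 2) :
    qcChi .B lam (fun j : Fin N => ((q : ℂ) ^ (((j : ℕ) : ℂ) + 1 / 2))) =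
    (∏ i : Fin N,
        Complex.ofReal (q ^ (-(L i) / 2) - q ^ (L i / 2)) /
          Complex.ofReal
            (q ^ (-((N : ℝ) - ((i : ℕ) : ℝ) - 1 / 2) / 2) -
              q ^ (((N : ℝ) - ((i : ℕ) : ℝ) - 1 / 2) / 2))) *
      (Vs (fun j : Fin N => Complex.ofReal (q ^ (L (Fin.rev j)))) /
        Vs (fun j : Fin N => Complex.ofReal (q ^ (((j : ℕ) : ℝ) + 1 / 2)))) :=
  stmt12_general q hq0 hq1 N lam hlam0 L hL
end
end

section
/- Let 0 < q < 1, let M ≥ 1 be an integer, let ν ∈ GT_{M+1}, and let 1 ≤ i ≤ M. For κ ∈ GT_M define P⁺(κ | ν) = s_κ(q, q², …, q^M) / s_ν(1, q, …, q^M) if κ interlaces ν (i.e. ν_1 ≥ κ_1 ≥ ν_2 ≥ κ_2 ≥ … ≥ κ_M ≥ ν_{M+1}), and P⁺(κ | ν) = 0 otherwise. Then P⁺(·|ν) is a probability distribution on GT_M (all values are nonnegative and they sum to 1), and Σ over κ ∈ GT_M with κ_i = ν_{i+1} of P⁺(κ | ν) ≥ 1 − q^i / (q;q)_∞², where (q;q)_∞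 = ∏_{n=1}^{∞}(1 − q^n). -/
/-!
Expanding the branching rule twice writes `s_λ(…, y, z)` as a sum over chains `ρ ≺ μ ≺ λ`.
For fixed `ρ, λ` the admissible `μ` form a box, and reflecting `μ` in that box exchanges the
exponents of `y` and `z`. So `qcSchur` is symmetric in its last two variables, hence under all
adjacent transpositions and all permutations. Branching on the first variable, which is `1` in
`s_ν(1, q, …, q^M)`, then gives `s_ν(1, q, …, q^M) = ∑_{κ ≺ ν} s_κ(q, …, q^M)`.

For the estimate, `κ ↦ κ - eᵢ` maps `{κ ≺ ν : κᵢ ≠ ν_{i+1}}` injectively into `{κ ≺ ν}`, and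
`s_κ(x) ≤ (xᵢ + ⋯ + x_M) s_{κ-eᵢ}(x)` by induction on the number of variables. Hence the
mass off `{κᵢ = ν_{i+1}}` is at most `qⁱ/(1-q) ≤ qⁱ/(q;q)_∞²`, as `0 < (q;q)_∞ ≤ 1 - q`.
-/

noncomputable section
open Complex Finset Filter Topology

/-- The Schur Laurent polynomial, defined via the branching rule. -/
def qcSchur {K : Type*} [Field K] : (N : ℕ) → (Fin N → ℤ) → (Fin N → K) → K
  | 0, _, _ => 1
  | N + 1, lam, x =>
      ∑ mu ∈ Fintype.piFinset (fun i : Fin N => Finset.Icc (lam i.succ) (lam i.castSucc)),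
        qcSchur N mu (fun i => x i.castSucc) *
          x (Fin.last N) ^ ((∑ i, lam i) - (∑ i, mu i))

/-- `P⁺(κ | ν) = 1_{κ ≺ ν} s_κ(q, q², …, q^M) / s_ν(1, q, …, q^M)`. -/
def Pplus (q : ℝ) (M : ℕ) (nu : Fin (M + 1) → ℤ) (ka : Fin M → ℤ) : ℝ :=
  if ∀ j : Fin M, ka j ≤ nu j.castSucc ∧ nu j.succ ≤ ka j then
    qcSchur M ka (fun j : Fin M => q ^ ((j : ℕ) + 1)) /
      qcSchur (M + 1) nu (fun j : Fin (M + 1) => q ^ (j : ℕ))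
  else 0

def interlacing (N : ℕ) (lam : Fin (N + 1) → ℤ) : Finset (Fin N → ℤ) :=
  Fintype.piFinset fun i => Icc (lam i.succ) (lam i.castSucc)

lemma mem_interlacing {N : ℕ} {lam : Fin (N + 1) → ℤ} {mu : Fin N → ℤ} :
    mu ∈ interlacing N lam ↔ ∀ i, lam i.succ ≤ mu i ∧ mu i ≤ lam i.castSucc := by
  simp [interlacing]

lemma qcSchur_succ {K : Type*} [Field K] (N : ℕ) (lam : Fin (N + 1) → ℤ)
    (x : Fin (N + 1) → K) :
    qcSchur (N + 1) lam x = ∑ mu ∈ interlacing N lam,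
      qcSchur N mu (fun i => x i.castSucc) * x (Fin.last N) ^ ((∑ i, lam i) - ∑ i, mu i) :=
  rfl

section Symmetry

variable {K : Type*} [Field K] {N : ℕ}

def boxLower (lam : Fin (N + 2) → ℤ) (rho : Fin N → ℤ) : Fin (N + 1) → ℤ :=
  Fin.lastCases (lam (Fin.last _)) fun j => max (lam j.castSucc.succ) (rho j)

def boxUpper (lam : Fin (N + 2) → ℤ) (rho : Fin N → ℤ) : Fin (N + 1) → ℤ :=
  Fin.cases (lam 0) fun j => min (lam j.succ.castSucc) (rho j)

lemma mem_interlacing_interlacing_iff {lam : Fin (N + 2) → ℤ} {mu : Fin (N + 1) → ℤ}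
    {rho : Fin N → ℤ} :
    mu ∈ interlacing (N + 1) lam ∧ rho ∈ interlacing N mu ↔
      ∀ k, boxLower lam rho k ≤ mu k ∧ mu k ≤ boxUpper lam rho k := by
  simp only [mem_interlacing]
  constructor
  · rintro ⟨hmu, hrho⟩ k
    constructor
    · induction k using Fin.lastCases with
      | last => simpa [boxLower] using (hmu (Fin.last N)).1
      | cast j =>
        simp only [boxLower, Fin.lastCases_castSucc, max_le_iff]
        exact ⟨(hmu j.castSucc).1, (hrho j).2⟩
    · induction k using Fin.cases with
      | zero => simpa [boxUpper] using (hmu 0).2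
      | succ j =>
        simp only [boxUpper, Fin.cases_succ, le_min_iff]
        exact ⟨(hmu j.succ).2, (hrho j).1⟩
  · intro h
    have hlow : ∀ j : Fin N, lam j.castSucc.succ ≤ mu j.castSucc ∧ rho j ≤ mu j.castSucc := by
      intro j; simpa [boxLower] using (h j.castSucc).1
    have hupp : ∀ j : Fin N, mu j.succ ≤ lam j.succ.castSucc ∧ mu j.succ ≤ rho j := by
      intro j; simpa [boxUpper] using (h j.succ).2
    refine ⟨fun k => ⟨?_, ?_⟩, fun j => ⟨(hupp j).2, (hlow j).2⟩⟩
    · induction k using Fin.lastCases with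
      | last => simpa [boxLower] using (h (Fin.last N)).1
      | cast j => exact (hlow j).1
    · induction k using Fin.cases with
      | zero => simpa [boxUpper] using (h 0).2
      | succ j => exact (hupp j).1

lemma sum_boxLower_add_sum_boxUpper (lam : Fin (N + 2) → ℤ) (rho : Fin N → ℤ) :
    (∑ k, boxLower lam rho k) + ∑ k, boxUpper lam rho k = (∑ i, lam i) + ∑ j, rho j := by
  have hmaxmin : ∑ j : Fin N,
      (max (lam j.castSucc.succ) (rho j) + min (lam j.succ.castSucc) (rho j)) =
        ∑ j : Fin N, (lam j.castSucc.succ + rho j) :=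
    Finset.sum_congr rfl fun j _ => by rw [Fin.succ_castSucc, max_add_min]
  rw [Finset.sum_add_distrib, Finset.sum_add_distrib] at hmaxmin
  rw [Fin.sum_univ_castSucc, Fin.sum_univ_succ (f := boxUpper lam rho),
    Fin.sum_univ_succ (f := lam), Fin.sum_univ_castSucc (f := fun k : Fin (N + 1) => lam k.succ)]
  simp only [boxLower, boxUpper, Fin.lastCases_last, Fin.lastCases_castSucc, Fin.cases_zero,
    Fin.cases_succ, Fin.succ_last]
  linear_combination hmaxmin

lemma sum_interlacing_interlacing_comm (lam : Fin (N + 2) → ℤ) (f : (Fin N → ℤ) → K)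
    (y z : K) :
    ∑ mu ∈ interlacing (N + 1) lam, ∑ rho ∈ interlacing N mu,
        f rho * y ^ ((∑ i, mu i) - ∑ i, rho i) * z ^ ((∑ i, lam i) - ∑ i, mu i) =
      ∑ mu ∈ interlacing (N + 1) lam, ∑ rho ∈ interlacing N mu,
        f rho * z ^ ((∑ i, mu i) - ∑ i, rho i) * y ^ ((∑ i, lam i) - ∑ i, mu i) := by
  let reflect (p : Σ _ : Fin (N + 1) → ℤ, Fin N → ℤ) : Σ _ : Fin (N + 1) → ℤ, Fin N → ℤ :=
    ⟨boxLower lam p.2 + boxUpper lam p.2 - p.1, p.2⟩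
  have hrefl : ∀ p ∈ (interlacing (N + 1) lam).sigma (interlacing N), reflect p ∈
      (interlacing (N + 1) lam).sigma (interlacing N) := by
    rintro ⟨mu, rho⟩ hp
    rw [mem_sigma, mem_interlacing_interlacing_iff] at hp ⊢
    intro k
    have := hp k
    simp only [reflect, Pi.add_apply, Pi.sub_apply] at this ⊢
    omega
  have hinv : ∀ p, reflect (reflect p) = p := by
    rintro ⟨mu, rho⟩
    simp only [reflect, sub_sub_cancel]
  rw [sum_sigma', sum_sigma']
  refine sum_nbij' reflect reflect hrefl hrefl (fun p _ => hinv p) (fun p _ => hinv p) ?_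
  rintro ⟨mu, rho⟩ -
  have hsum := sum_boxLower_add_sum_boxUpper lam rho
  simp only [reflect, Pi.add_apply, Pi.sub_apply, sum_sub_distrib, sum_add_distrib]
  rw [mul_assoc, mul_assoc, mul_comm (z ^ _)]
  congr 3 <;> omega

lemma qcSchur_comp_swap_last (lam : Fin (N + 2) → ℤ) (x : Fin (N + 2) → K) :
    qcSchur (N + 2) lam (x ∘ Equiv.swap (Fin.last N).castSucc (Fin.last (N + 1))) =
      qcSchur (N + 2) lam x := by
  have hfix : ∀ j : Fin N,
      Equiv.swap (Fin.last N).castSucc (Fin.last (N + 1)) j.castSucc.castSucc =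
        j.castSucc.castSucc := fun j =>
    Equiv.swap_apply_of_ne_of_ne (by simp [Fin.ext_iff, j.isLt.ne])
      (by simp [Fin.ext_iff]; omega)
  simp only [qcSchur_succ, sum_mul, Function.comp_apply, hfix, Equiv.swap_apply_left,
    Equiv.swap_apply_right]
  exact sum_interlacing_interlacing_comm lam _ _ _

lemma qcSchur_comp_swap_castSucc_succ :
    ∀ (N : ℕ) (lam : Fin (N + 1) → ℤ) (x : Fin (N + 1) → K) (i : Fin N),
      qcSchur (N + 1) lam (x ∘ Equiv.swap i.castSucc i.succ) = qcSchur (N + 1) lam x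
  | 0, _, _, i => i.elim0
  | N + 1, lam, x, i => by
    induction i using Fin.lastCases with
    | last => rw [Fin.succ_last]; exact qcSchur_comp_swap_last lam x
    | cast j =>
      have hrestrict : (x ∘ Equiv.swap j.castSucc.castSucc j.castSucc.succ) ∘ Fin.castSucc
          = (x ∘ Fin.castSucc) ∘ Equiv.swap j.castSucc j.succ := by
        rw [Function.comp_assoc, Fin.succ_castSucc, (Fin.castSucc_injective _).swap_comp]
        rfl
      have hlast : Equiv.swap j.castSucc.castSucc j.castSucc.succ (Fin.last (N + 1))
          = Fin.last (N + 1) :=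
        Equiv.swap_apply_of_ne_of_ne (Fin.castSucc_lt_last _).ne'
          (by simp [Fin.ext_iff]; omega)
      rw [qcSchur_succ, qcSchur_succ]
      refine sum_congr rfl fun mu _ => ?_
      rw [Function.comp_apply, hlast]
      congr 1
      exact (congrArg (qcSchur (N + 1) mu) hrestrict).trans
        (qcSchur_comp_swap_castSucc_succ N mu (x ∘ Fin.castSucc) j)

lemma qcSchur_comp_perm (lam : Fin N → ℤ) (x : Fin N → K) (σ : Equiv.Perm (Fin N)) :
    qcSchur N lam (x ∘ σ) = qcSchur N lam x := by
  cases N with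
  | zero => rfl
  | succ N =>
    have hσ : σ ∈ Submonoid.closure
        (Set.range fun i : Fin N => Equiv.swap i.castSucc i.succ) := by
      rw [Equiv.Perm.mclosure_swap_castSucc_succ]; trivial
    induction hσ using Submonoid.closure_induction generalizing x with
    | mem _ h =>
      obtain ⟨i, rfl⟩ := h
      exact qcSchur_comp_swap_castSucc_succ N lam x i
    | one => rfl
    | mul σ τ _ _ hσ hτ =>
      rw [Equiv.Perm.coe_mul, ← Function.comp_assoc, hτ, hσ]

lemma qcSchur_succ_first (N : ℕ) (lam : Fin (N + 1) → ℤ) (x : Fin (N + 1) → K) :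
    qcSchur (N + 1) lam x = ∑ mu ∈ interlacing N lam,
      qcSchur N mu (fun i => x i.succ) * x 0 ^ ((∑ i, lam i) - ∑ i, mu i) := by
  rw [← qcSchur_comp_perm lam x (finRotate (N + 1)), qcSchur_succ]
  simp only [Function.comp_apply, finRotate_apply, Fin.coeSucc_eq_succ, Fin.last_add_one]

end Symmetry

section Positivity

variable {K : Type*} [Field K] [LinearOrder K] [IsStrictOrderedRing K]

lemma qcSchur_nonneg : ∀ {N : ℕ} (lam : Fin N → ℤ) {x : Fin N → K}, (∀ j, 0 ≤ x j) →
    0 ≤ qcSchur N lam x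
  | 0, _, _, _ => zero_le_one
  | N + 1, lam, x, hx => by
    rw [qcSchur_succ]
    exact sum_nonneg fun mu _ =>
      mul_nonneg (qcSchur_nonneg mu fun j => hx _) (zpow_nonneg (hx _) _)

lemma qcSchur_pos : ∀ {N : ℕ} {lam : Fin N → ℤ} {x : Fin N → K}, Antitone lam →
    (∀ j, 0 < x j) → 0 < qcSchur N lam x
  | 0, _, _, _, _ => zero_lt_one
  | N + 1, lam, x, hlam, hx => by
    rw [qcSchur_succ]
    have hmem : (fun i => lam i.castSucc) ∈ interlacing N lam :=
      mem_interlacing.2 fun i => ⟨hlam i.castSucc_le_succ, le_rfl⟩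
    refine sum_pos' (fun mu _ =>
      mul_nonneg (qcSchur_nonneg mu fun j => (hx _).le) (zpow_nonneg (hx _).le _)) ⟨_, hmem, ?_⟩
    exact mul_pos (qcSchur_pos (hlam.comp_monotone Fin.strictMono_castSucc.monotone)
      fun j => hx _) (zpow_pos (hx _) _)

end Positivity

lemma sum_le_sum_of_injective_of_nonneg {ι κ R : Type*} [AddCommMonoid R] [PartialOrder R]
    [IsOrderedAddMonoid R] {s : Finset ι} {t : Finset κ} {f : ι → R} {g : κ → R}
    (e : ι → κ) (he : Function.Injective e) (hst : ∀ a ∈ s, e a ∈ t) (hg : ∀ b ∈ t, 0 ≤ g b)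
    (h : ∀ a ∈ s, f a ≤ g (e a)) : ∑ a ∈ s, f a ≤ ∑ b ∈ t, g b :=
  calc ∑ a ∈ s, f a ≤ ∑ a ∈ s, g (e a) := sum_le_sum h
    _ = ∑ b ∈ s.map ⟨e, he⟩, g b := (sum_map s ⟨e, he⟩ g).symm
    _ ≤ ∑ b ∈ t, g b := sum_le_sum_of_subset_of_nonneg
        (fun b hb => by obtain ⟨a, ha, rfl⟩ := mem_map.1 hb; exact hst a ha)
        fun b hb _ => hg b hb

section Decrement

variable {N : ℕ}

lemma sum_sub_single_one {ι : Type*} [Fintype ι] [DecidableEq ι] (f : ι → ℤ) (r : ι) :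
    ∑ i, (f - Pi.single r 1 : ι → ℤ) i = (∑ i, f i) - 1 := by
  simp

lemma sub_single_mem_interlacing {lam : Fin (N + 1) → ℤ} {mu : Fin N → ℤ} {r : Fin N}
    (hmu : mu ∈ interlacing N lam) (hr : lam r.succ < mu r) :
    mu - Pi.single r 1 ∈ interlacing N lam := by
  rw [mem_interlacing] at hmu ⊢
  intro i
  have := hmu i
  rcases eq_or_ne i r with rfl | hi
  · simp only [Pi.sub_apply, Pi.single_eq_same]; omega
  · simpa [hi] using this

lemma mem_interlacing_sub_single {lam : Fin (N + 1) → ℤ} {mu : Fin N → ℤ} {r : Fin (N + 1)}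
    (hmu : mu ∈ interlacing N lam) (hr : ∀ i, i.castSucc = r → mu i < lam r) :
    mu ∈ interlacing N (lam - Pi.single r 1) := by
  rw [mem_interlacing] at hmu ⊢
  intro i
  have := hmu i
  simp only [Pi.sub_apply, Pi.single_apply]
  constructor
  · split_ifs <;> omega
  · split_ifs with h
    · have := hr i h; subst h; omega
    · omega

lemma sum_filter_castSucc_le {M : Type*} [AddCommMonoid M] (x : Fin (N + 1) → M)
    (r : Fin N) :
    ∑ j with r.castSucc ≤ j, x j = (∑ j with r ≤ j, x j.castSucc) + x (Fin.last N) := by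
  simp only [sum_filter, Fin.sum_univ_castSucc, Fin.castSucc_le_castSucc_iff,
    if_pos (Fin.castSucc_lt_last r).le]

variable {K : Type*} [Field K] [LinearOrder K] [IsStrictOrderedRing K]

lemma sum_filter_lt_le_mul_qcSchur {lam : Fin (N + 1) → ℤ} {x : Fin (N + 1) → K}
    (hx : ∀ j, 0 < x j) (r : Fin (N + 1)) :
    ∑ mu ∈ interlacing N lam with ∀ i, i.castSucc = r → mu i < lam r,
        qcSchur N mu (fun i => x i.castSucc) * x (Fin.last N) ^ ((∑ i, lam i) - ∑ i, mu i) ≤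
      x (Fin.last N) * qcSchur (N + 1) (lam - Pi.single r 1) x := by
  rw [qcSchur_succ, mul_sum]
  refine sum_le_sum_of_injective_of_nonneg id Function.injective_id
    (fun mu hmu => mem_interlacing_sub_single (mem_filter.1 hmu).1 (mem_filter.1 hmu).2)
    (fun mu _ => mul_nonneg (hx _).le
      (mul_nonneg (qcSchur_nonneg mu fun j => (hx _).le) (zpow_nonneg (hx _).le _)))
    fun mu _ => le_of_eq ?_
  rw [id, sum_sub_single_one, mul_left_comm, ← zpow_one_add₀ (hx _).ne']
  ring_nf

lemma sum_filter_eq_le_mul_qcSchur {lam : Fin (N + 1) → ℤ} {x : Fin (N + 1) → K}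
    (hx : ∀ j, 0 < x j) (r : Fin N) (hr : lam r.succ < lam r.castSucc) {C : K} (hC : 0 ≤ C)
    (h : ∀ mu ∈ interlacing N lam, mu r = lam r.castSucc →
      qcSchur N mu (fun i => x i.castSucc) ≤
        C * qcSchur N (mu - Pi.single r 1) (fun i => x i.castSucc)) :
    ∑ mu ∈ interlacing N lam with mu r = lam r.castSucc,
        qcSchur N mu (fun i => x i.castSucc) * x (Fin.last N) ^ ((∑ i, lam i) - ∑ i, mu i) ≤
      C * qcSchur (N + 1) (lam - Pi.single r.castSucc 1) x := by
  rw [qcSchur_succ, mul_sum]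
  refine sum_le_sum_of_injective_of_nonneg (· - Pi.single r 1) sub_left_injective
    (fun mu hmu => ?_)
    (fun mu _ => mul_nonneg hC
      (mul_nonneg (qcSchur_nonneg mu fun j => (hx _).le) (zpow_nonneg (hx _).le _)))
    fun mu hmu => ?_
  · obtain ⟨hmem, heq⟩ := mem_filter.1 hmu
    refine mem_interlacing_sub_single (sub_single_mem_interlacing hmem (heq ▸ hr)) ?_
    rintro i hi
    obtain rfl := Fin.castSucc_injective _ hi
    have := (mem_interlacing.1 hmem i).2
    simp only [Pi.sub_apply, Pi.single_eq_same]
    omega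
  · obtain ⟨hmem, heq⟩ := mem_filter.1 hmu
    rw [sum_sub_single_one, sum_sub_single_one, sub_sub_sub_cancel_right, ← mul_assoc]
    exact mul_le_mul_of_nonneg_right (h mu hmem heq) (zpow_nonneg (hx _).le _)

theorem qcSchur_le_mul_qcSchur_sub_single : ∀ {N : ℕ} {lam : Fin N → ℤ} {x : Fin N → K}
    (r : Fin N), (∀ j, 0 < x j) → (∀ k, r < k → lam k < lam r) →
      qcSchur N lam x ≤ (∑ j with r ≤ j, x j) * qcSchur N (lam - Pi.single r 1) x
  | 0, _, _, r, _, _ => r.elim0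
  | N + 1, lam, x, r, hx, hr => by
    rw [qcSchur_succ N lam x,
      ← sum_filter_add_sum_filter_not _ (fun mu => ∀ i, i.castSucc = r → mu i < lam r)]
    have hlt := sum_filter_lt_le_mul_qcSchur (lam := lam) hx r
    obtain ⟨r, rfl⟩ | rfl := Fin.eq_castSucc_or_eq_last r
    · have hnot : ∀ mu ∈ interlacing N lam,
          (¬ ∀ i, i.castSucc = r.castSucc → mu i < lam r.castSucc) ↔ mu r = lam r.castSucc := by
        intro mu hmu
        have := (mem_interlacing.1 hmu r).2
        simp only [Fin.castSucc_inj, forall_eq, not_lt]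
        omega
      have heq := sum_filter_eq_le_mul_qcSchur hx r (hr _ Fin.castSucc_lt_succ)
        (sum_nonneg fun j _ => (hx _).le) fun mu hmu hmur =>
          qcSchur_le_mul_qcSchur_sub_single r (fun j => hx _) fun k hk =>
            hmur ▸ ((mem_interlacing.1 hmu k).2.trans_lt
              (hr _ (Fin.castSucc_lt_castSucc_iff.2 hk)))
      rw [filter_congr hnot, sum_filter_castSucc_le, add_mul]
      linarith
    · have hnot : ∀ mu ∈ interlacing N lam,
          (¬ ∀ i, i.castSucc = Fin.last N → mu i < lam (Fin.last N)) ↔ False := by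
        intro mu _
        simp [(Fin.castSucc_lt_last _).ne]
      rw [filter_congr hnot, filter_false, sum_empty, add_zero]
      simpa [Fin.last_le_iff, sum_filter] using hlt

end Decrement

section QPochhammer

variable {q : ℝ}

lemma summable_log_one_sub_pow_succ (hq0 : 0 ≤ q) (hq1 : q < 1) :
    Summable fun n : ℕ => Real.log (1 - q ^ (n + 1)) := by
  have hgeom : Summable fun n : ℕ => -q ^ (n + 1) :=
    ((summable_geometric_of_lt_one hq0 hq1).mul_left q).neg.congr fun n => by ring
  simpa [sub_eq_add_neg] using Real.summable_log_one_add_of_summable hgeom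

lemma one_sub_pow_succ_pos (hq0 : 0 ≤ q) (hq1 : q < 1) (n : ℕ) : 0 < 1 - q ^ (n + 1) :=
  sub_pos.2 (pow_lt_one₀ hq0 hq1 n.succ_ne_zero)

lemma tprod_one_sub_pow_succ_pos (hq0 : 0 ≤ q) (hq1 : q < 1) :
    0 < ∏' n : ℕ, (1 - q ^ (n + 1)) := by
  rw [← Real.rexp_tsum_eq_tprod (one_sub_pow_succ_pos hq0 hq1)
    (summable_log_one_sub_pow_succ hq0 hq1)]
  exact Real.exp_pos _

lemma sq_tprod_one_sub_pow_succ_le (hq0 : 0 ≤ q) (hq1 : q < 1) :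
    (∏' n : ℕ, (1 - q ^ (n + 1))) ^ 2 ≤ 1 - q := by
  have htail : Multipliable fun n : ℕ => 1 - q ^ (n + 1 + 1) :=
    Real.multipliable_of_summable_log (fun n => one_sub_pow_succ_pos hq0 hq1 (n + 1))
      ((summable_log_one_sub_pow_succ hq0 hq1).comp_injective (add_left_injective 1))
  have htail_le : ∏' n : ℕ, (1 - q ^ (n + 1 + 1)) ≤ 1 :=
    htail.tprod_le_of_prod_range_le fun n => prod_le_one
      (fun k _ => (one_sub_pow_succ_pos hq0 hq1 (k + 1)).le)
      fun k _ => sub_le_self _ (pow_nonneg hq0 _)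
  have hP := tprod_one_sub_pow_succ_pos hq0 hq1
  have hle : ∏' n : ℕ, (1 - q ^ (n + 1)) ≤ 1 - q := by
    rw [tprod_eq_zero_mul' (f := fun n : ℕ => 1 - q ^ (n + 1)) htail, zero_add, pow_one]
    exact mul_le_of_le_one_right (sub_nonneg.2 hq1.le) htail_le
  nlinarith

end QPochhammer

section Pplus

variable {q : ℝ} {M : ℕ} {nu : Fin (M + 1) → ℤ}

lemma Pplus_of_mem {ka : Fin M → ℤ} (h : ka ∈ interlacing M nu) :
    Pplus q M nu ka = qcSchur M ka (fun j : Fin M => q ^ ((j : ℕ) + 1)) /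
      qcSchur (M + 1) nu (fun j : Fin (M + 1) => q ^ (j : ℕ)) :=
  if_pos fun j => (and_comm.1 (mem_interlacing.1 h j))

lemma Pplus_of_notMem {ka : Fin M → ℤ} (h : ka ∉ interlacing M nu) : Pplus q M nu ka = 0 :=
  if_neg fun h' => h (mem_interlacing.2 fun j => and_comm.1 (h' j))

lemma Pplus_nonneg (hq : 0 ≤ q) (ka : Fin M → ℤ) : 0 ≤ Pplus q M nu ka := by
  unfold Pplus
  split_ifs
  · exact div_nonneg (qcSchur_nonneg _ fun j => pow_nonneg hq _)
      (qcSchur_nonneg _ fun j => pow_nonneg hq _)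
  · exact le_rfl

lemma qcSchur_pow_eq_sum_interlacing :
    qcSchur (M + 1) nu (fun j : Fin (M + 1) => q ^ (j : ℕ)) =
      ∑ ka ∈ interlacing M nu, qcSchur M ka (fun j : Fin M => q ^ ((j : ℕ) + 1)) := by
  simp [qcSchur_succ_first]

lemma sum_Pplus (hq : 0 < q) (hnu : Antitone nu) :
    ∑ ka ∈ interlacing M nu, Pplus q M nu ka = 1 := by
  rw [sum_congr rfl fun ka => Pplus_of_mem, ← sum_div, ← qcSchur_pow_eq_sum_interlacing]
  exact div_self (qcSchur_pos hnu fun j => pow_pos hq _).ne'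

lemma hasSum_Pplus (hq : 0 < q) (hnu : Antitone nu) : HasSum (Pplus q M nu) 1 :=
  sum_Pplus hq hnu ▸ hasSum_sum_of_ne_finset_zero fun _ => Pplus_of_notMem

lemma sum_filter_le_pow_div_one_sub (hq0 : 0 ≤ q) (hq1 : q < 1) (r : Fin M) :
    ∑ j with r ≤ j, q ^ ((j : ℕ) + 1) ≤ q ^ ((r : ℕ) + 1) / (1 - q) :=
  (sum_le_sum_of_injective_of_nonneg (fun j : Fin M => (j : ℕ) + 1)
    (add_left_injective 1 |>.comp Fin.val_injective)
    (fun j hj => mem_Ico.2 ⟨by simpa using Fin.le_def.1 (mem_filter.1 hj).2, by omega⟩)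
    (fun n _ => pow_nonneg hq0 n) fun j _ => le_rfl).trans
    (geom_sum_Ico_le_of_lt_one (n := M + 1) hq0 hq1)

lemma sum_Pplus_filter_ne_le (hq0 : 0 < q) (hq1 : q < 1) (hnu : Antitone nu) (r : Fin M) :
    ∑ ka ∈ interlacing M nu with ka r ≠ nu r.succ, Pplus q M nu ka ≤
      q ^ ((r : ℕ) + 1) / (1 - q) := by
  have hD : 0 < qcSchur (M + 1) nu (fun j : Fin (M + 1) => q ^ (j : ℕ)) :=
    qcSchur_pos hnu fun j => pow_pos hq0 _
  have hC : 0 ≤ ∑ j with r ≤ j, q ^ ((j : ℕ) + 1) := sum_nonneg fun j _ => (pow_pos hq0 _).le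
  have hbound : ∑ ka ∈ interlacing M nu with ka r ≠ nu r.succ,
      qcSchur M ka (fun j : Fin M => q ^ ((j : ℕ) + 1)) ≤
        (∑ j with r ≤ j, q ^ ((j : ℕ) + 1)) *
          qcSchur (M + 1) nu (fun j : Fin (M + 1) => q ^ (j : ℕ)) := by
    rw [qcSchur_pow_eq_sum_interlacing, mul_sum]
    refine sum_le_sum_of_injective_of_nonneg (· - Pi.single r 1) sub_left_injective
      (fun ka hka => ?_)
      (fun ka _ => mul_nonneg hC (qcSchur_nonneg _ fun j => (pow_pos hq0 _).le)) fun ka hka => ?_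
    all_goals
      obtain ⟨hmem, hne⟩ := mem_filter.1 hka
      have hlt : nu r.succ < ka r := lt_of_le_of_ne (mem_interlacing.1 hmem r).1 (Ne.symm hne)
    · exact sub_single_mem_interlacing hmem hlt
    · refine qcSchur_le_mul_qcSchur_sub_single r (fun j => pow_pos hq0 _) fun k hk => ?_
      calc ka k ≤ nu k.castSucc := (mem_interlacing.1 hmem k).2
        _ ≤ nu r.succ := hnu (Fin.succ_le_castSucc_iff.2 hk)
        _ < ka r := hlt
  rw [sum_congr rfl fun ka hka => Pplus_of_mem (mem_filter.1 hka).1, ← sum_div, div_le_iff₀ hD]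
  exact hbound.trans
    (mul_le_mul_of_nonneg_right (sum_filter_le_pow_div_one_sub hq0.le hq1 r) hD.le)

lemma le_finsum_Pplus_eq (hq0 : 0 < q) (hq1 : q < 1) (hnu : Antitone nu) (r : Fin M) :
    1 - q ^ ((r : ℕ) + 1) / (1 - q) ≤
      ∑ᶠ ka ∈ {ka : Fin M → ℤ | ka r = nu r.succ}, Pplus q M nu ka := by
  have hfin : ∑ᶠ ka ∈ {ka : Fin M → ℤ | ka r = nu r.succ}, Pplus q M nu ka =
      ∑ ka ∈ interlacing M nu with ka r = nu r.succ, Pplus q M nu ka := by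
    refine finsum_mem_eq_sum_of_inter_support_eq _ (Set.ext fun ka => ?_)
    simp only [Set.mem_inter_iff, Set.mem_ofPred_eq, coe_filter, Function.mem_support]
    exact ⟨fun h => ⟨⟨by_contra fun hka => h.2 (Pplus_of_notMem hka), h.1⟩, h.2⟩,
      fun h => ⟨h.1.2, h.2⟩⟩
  have hsplit := sum_filter_add_sum_filter_not (interlacing M nu) (fun ka => ka r = nu r.succ)
    (Pplus q M nu)
  rw [sum_Pplus hq0 hnu] at hsplit
  rw [hfin]
  linarith [sum_Pplus_filter_ne_le hq0 hq1 hnu r]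

end Pplus

/-- `P⁺(· | ν)` is a probability distribution on `GT_M`, and the
`P⁺(· | ν)`-mass of the set `{κ : κ_i = ν_{i+1}}` is at least `1 − qⁱ/(q;q)_∞²`
(Lemma 5.6, `lem:est1`). -/
theorem stmt14 (q : ℝ) (hq0 : 0 < q) (hq1 : q < 1)
    (M : ℕ) (nu : Fin (M + 1) → ℤ) (hnu : Antitone nu)
    (i : ℕ) (hi1 : 1 ≤ i) (hiM : i ≤ M) :
    (∀ ka : Fin M → ℤ, 0 ≤ Pplus q M nu ka) ∧
    HasSum (Pplus q M nu) 1 ∧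
    1 - q ^ i / (∏' n : ℕ, (1 - q ^ (n + 1))) ^ 2 ≤
      ∑ᶠ ka ∈ {ka : Fin M → ℤ | ka ⟨i - 1, by omega⟩ = nu ⟨i, by omega⟩},
        Pplus q M nu ka := by
  refine ⟨Pplus_nonneg hq0.le, hasSum_Pplus hq0 hnu, ?_⟩
  have hsucc : (⟨i - 1, by omega⟩ : Fin M).succ = ⟨i, by omega⟩ := Fin.ext (by simp; omega)
  have hmass := le_finsum_Pplus_eq hq0 hq1 hnu ⟨i - 1, by omega⟩
  rw [hsucc, show i - 1 + 1 = i by omega] at hmass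
  refine le_trans (sub_le_sub_left ?_ _) hmass
  exact div_le_div_of_nonneg_left (pow_nonneg hq0.le _)
    (pow_pos (tprod_one_sub_pow_succ_pos hq0.le hq1) _) (sq_tprod_one_sub_pow_succ_le hq0.le hq1)
end
end
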